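/- Let p be a prime, let 1 → A → B → C → 1 be a short exact sequence of groups, fix integers i ≥ 0 and j ≥ 0, and let 𝓣 be a set of subgroups of B which is directed by reverse inclusion (for U₁, U₂ ∈ 𝓣 there is U ∈ 𝓣 with U ⊆ U₁ ∩ U₂). For U ∈ 𝓣 set M_U = H_j(U∩A;F_p) and V_U = U/(U∩A); for U₁ ⊆ U₂ in 𝓣 the inclusion U₁ ⊆ U₂ induces a group homomorphism V_{U₁} → V_{U₂} and a compatible map of coefficients M_{U₁} → M_{U₂}, hence transition maps H_i(V_{U₁}; M_{U₁}) → H_i(V_{U₂}; M_{U₂}). Suppose each M_U is finite and the inverse limit of the system (M_U)_{U∈𝓣} is zero. Then the inverse limit of the system (H_i(V_U; M_U))_{U∈𝓣} is zero. -/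

import Mathlib

/-! Inhomogeneous chains computing group homology, with coefficients either in the
trivial module `F_p` or in an abelian group `M` equipped with a `G`-action
`ρ : G →* AddAut M`.  `C_n(G;M) = (Fin n → G) →₀ M` and
`d(g₁,…,g_{n+1}; m) = (g₂,…,g_{n+1}; ρ(g₁)⁻¹m)
  + Σ_j (-1)^{j+1}(g₁,…,g_jg_{j+1},…,g_{n+1}; m) + (-1)^{n+1}(g₁,…,g_n; m)`. -/

/-- The differential on inhomogeneous chains computing `H_*(G;F_p)` with trivial
coefficients. -/
noncomputable def chainsD (p : ℕ) (G : Type*) [Group G] (n : ℕ) :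
    ((Fin (n + 1) → G) →₀ ZMod p) →ₗ[ZMod p] ((Fin n → G) →₀ ZMod p) :=
  Finsupp.lsum (ZMod p) fun g =>
    LinearMap.toSpanSingleton (ZMod p) _
      (Finsupp.single (fun i => g i.succ) 1 +
        Finset.univ.sum fun j : Fin (n + 1) =>
          (-1 : ZMod p) ^ ((j : ℕ) + 1) •
            Finsupp.single (Fin.contractNth j (· * ·) g) (1 : ZMod p))

/-- The `n`-cycles (with trivial coefficients `F_p`); in degree `0` everything is a
cycle. -/
noncomputable def cyclesAt (p : ℕ) (G : Type*) [Group G] :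
    (n : ℕ) → Submodule (ZMod p) ((Fin n → G) →₀ ZMod p)
  | 0 => ⊤
  | n + 1 => LinearMap.ker (chainsD p G n)

/-- The `n`-boundaries, as a submodule of the `n`-cycles. -/
noncomputable def boundariesIn (p : ℕ) (G : Type*) [Group G] (n : ℕ) :
    Submodule (ZMod p) ↥(cyclesAt p G n) :=
  (LinearMap.range (chainsD p G n)).comap (cyclesAt p G n).subtype

/-- The group homology `H_n(G;F_p)` (trivial coefficients), as cycles modulo
boundaries. -/
noncomputable abbrev Hgrp (p : ℕ) (G : Type*) [Group G] (n : ℕ) :=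
  ↥(cyclesAt p G n) ⧸ boundariesIn p G n

/-- The multiplicative group structure on `AddAut M` of the older Mathlib (composition,
`e₁ * e₂ = e₂.trans e₁`, unit `refl`, inverse `symm`), which Mathlib has since replaced by an
additive group structure. -/
instance addAutGroupOld (M : Type*) [Add M] : Group (AddAut M) where
  mul g h := AddEquiv.trans h g
  one := AddEquiv.refl _
  inv := AddEquiv.symm
  mul_assoc _ _ _ := rfl
  one_mul _ := rfl
  mul_one _ := rfl
  inv_mul_cancel := AddEquiv.self_trans_symm

/-- The differential on inhomogeneous chains with coefficients in `M`, for the action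
`ρ : G →* AddAut M`. -/
noncomputable def chainsDAct {G M : Type*} [Group G] [AddCommGroup M]
    (ρ : G →* AddAut M) (n : ℕ) (x : (Fin (n + 1) → G) →₀ M) : (Fin n → G) →₀ M :=
  x.sum fun g m =>
    Finsupp.single (fun i => g i.succ) ((ρ (g 0))⁻¹ m) +
      Finset.univ.sum fun j : Fin (n + 1) =>
        ((-1 : ℤ) ^ ((j : ℕ) + 1)) • Finsupp.single (Fin.contractNth j (· * ·) g) m

/-- The property of being an `n`-cycle (with coefficients in `(M, ρ)`); in degree `0`
everything is a cycle. -/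
def IsCycleAct {G M : Type*} [Group G] [AddCommGroup M] (ρ : G →* AddAut M) :
    (n : ℕ) → ((Fin n → G) →₀ M) → Prop
  | 0, _ => True
  | n + 1, x => chainsDAct ρ n x = 0

/-- The map on chains induced by a group homomorphism `φ : G →* G'` and a compatible map
of coefficients `f : M →+ M'`. -/
noncomputable def chainMapAct {G G' M M' : Type*} [Group G] [Group G']
    [AddCommGroup M] [AddCommGroup M'] (φ : G →* G') (f : M →+ M') (n : ℕ)
    (x : (Fin n → G) →₀ M) : (Fin n → G') →₀ M' :=
  Finsupp.mapDomain (fun v => φ ∘ v) (Finsupp.mapRange f f.map_zero x)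

/-- The map on chains with trivial coefficients `F_p` induced by `φ : G →* G'`. -/
noncomputable def chainMapTriv (p : ℕ) {G G' : Type*} [Group G] [Group G']
    (φ : G →* G') (n : ℕ) (x : (Fin n → G) →₀ ZMod p) : (Fin n → G') →₀ ZMod p :=
  Finsupp.mapDomain (fun v => φ ∘ v) x

/-- Conjugation by `u ∈ U` on `A ⊓ U` (for `A` normal in `B`). -/
def conjHom {B : Type*} [Group B] {A U : Subgroup B} (hA : A.Normal) (u : U) :
    ↥(A ⊓ U) →* ↥(A ⊓ U) :=
  MonoidHom.mk' (fun x => ⟨(u : B) * x * (u : B)⁻¹,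
      Subgroup.mem_inf.2 ⟨hA.conj_mem _ (Subgroup.mem_inf.1 x.2).1 _,
        Subgroup.mul_mem _ (Subgroup.mul_mem _ u.2 (Subgroup.mem_inf.1 x.2).2)
          (Subgroup.inv_mem _ u.2)⟩⟩)
    (fun x y => by ext; simp [mul_assoc])

/-- The homomorphism `U₁/(U₁ ∩ A) → U₂/(U₂ ∩ A)` induced by an inclusion `U₁ ≤ U₂`. -/
noncomputable def quotMapOf {B : Type*} [Group B] {A U₁ U₂ : Subgroup B}
    (hA : A.Normal) (h : U₁ ≤ U₂) :
    (↥U₁ ⧸ A.subgroupOf U₁) →* (↥U₂ ⧸ A.subgroupOf U₂) :=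
  QuotientGroup.map _ _ (Subgroup.inclusion h) (by
    intro x hx
    simpa [Subgroup.mem_comap, Subgroup.mem_subgroupOf] using hx)


/-! Each `M_U` is finite, so the system `(M_U)` is Mittag-Leffler and every element of an
eventual image extends to a compatible family. The only compatible family is `0`, hence below
every `U ∈ 𝓣` there is `W ∈ 𝓣` with `M_W → M_U` zero. A cycle `z_U` is homologous to the image
of `z_W`, whose coefficients all vanish, so `z_U` is a boundary. -/

open CategoryTheory

namespace CategoryTheory.Functor

variable {J : Type*} [Category J] [IsCofilteredOrEmpty J] (F : J ⥤ Type*)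
  [∀ j, Finite (F.obj j)] [∀ j, Nonempty (F.obj j)]

theorem exists_section_of_mem_eventualRange {j : J} {x : F.obj j}
    (hx : x ∈ F.eventualRange j) : ∃ s : F.sections, s.val j = x := by
  have hML : F.IsMittagLeffler :=
    F.isMittagLeffler_of_exists_finite_range fun j => ⟨j, 𝟙 j, Set.toFinite _⟩
  have := F.toEventualRanges_nonempty hML
  obtain ⟨s, hs⟩ := F.toEventualRanges.eval_section_surjective_of_surjective
    (F.surjective_toEventualRanges hML) j ⟨x, hx⟩
  exact ⟨F.toEventualRangesSectionsEquiv s, congrArg Subtype.val hs⟩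

theorem exists_map_eq_of_subsingleton_sections [Subsingleton F.sections] (s : F.sections)
    (j : J) : ∃ (i : J) (f : i ⟶ j), ∀ y, F.map f y = s.val j := by
  have hML : F.IsMittagLeffler :=
    F.isMittagLeffler_of_exists_finite_range fun j => ⟨j, 𝟙 j, Set.toFinite _⟩
  obtain ⟨i, f, hf⟩ := F.isMittagLeffler_iff_eventualRange.1 hML j
  refine ⟨i, f, fun y => ?_⟩
  obtain ⟨t, ht⟩ := F.exists_section_of_mem_eventualRange (hf ▸ Set.mem_range_self y)
  rw [← ht, Subsingleton.elim t s]

end CategoryTheory.Functor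

namespace DirectedSystem

variable {ι : Type*} [Preorder ι] (F : ι → Type*) (f : ∀ ⦃i j⦄, i ≤ j → F i → F j)
  [DirectedSystem F f]

def functor : ι ⥤ Type _ where
  obj := F
  map h := TypeCat.ofHom (f h.le)
  map_id _ := by ext x; exact map_self x
  map_comp g h := by ext x; exact (map_map g.le h.le x).symm

variable {F f} [IsCodirectedOrder ι] [∀ i, Finite (F i)] [∀ i, Nonempty (F i)]

theorem exists_map_eq_of_unique_compatible (s : ∀ i, F i)
    (hs : ∀ ⦃i j⦄ (h : i ≤ j), f h (s i) = s j)
    (huniq : ∀ t : ∀ i, F i, (∀ ⦃i j⦄ (h : i ≤ j), f h (t i) = t j) → t = s) (j : ι) :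
    ∃ i, ∃ h : i ≤ j, ∀ y, f h y = s j := by
  have : Subsingleton (functor F f).sections :=
    ⟨fun t t' => Subtype.ext <| (huniq t.1 fun _ _ h => t.2 h.hom).trans
      (huniq t'.1 fun _ _ h => t'.2 h.hom).symm⟩
  have : ∀ i, Finite ((functor F f).obj i) := fun i => (inferInstance : Finite (F i))
  have : ∀ i, Nonempty ((functor F f).obj i) := fun i => (inferInstance : Nonempty (F i))
  obtain ⟨i, g, hg⟩ := (functor F f).exists_map_eq_of_subsingleton_sections
    ⟨s, fun g => hs g.le⟩ j
  exact ⟨i, g.le, hg⟩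

end DirectedSystem

section ChainMaps

variable (p : ℕ) {G G' G'' : Type*} [Group G] [Group G'] [Group G'']

theorem chainMapTriv_comp (φ : G →* G') (ψ : G' →* G'') (n : ℕ)
    (z : (Fin n → G) →₀ ZMod p) :
    chainMapTriv p ψ n (chainMapTriv p φ n z) = chainMapTriv p (ψ.comp φ) n z :=
  (Finsupp.mapDomain_comp ..).symm

theorem chainMapTriv_id (n : ℕ) (z : (Fin n → G) →₀ ZMod p) :
    chainMapTriv p (MonoidHom.id G) n z = z :=
  Finsupp.mapDomain_id

theorem chainsD_chainMapTriv (φ : G →* G') (n : ℕ) (z : (Fin (n + 1) → G) →₀ ZMod p) :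
    chainsD p G' n (chainMapTriv p φ (n + 1) z) = chainMapTriv p φ n (chainsD p G n z) := by
  unfold chainMapTriv
  induction z using Finsupp.induction_linear with
  | zero => simp
  | add a b ha hb => simp only [Finsupp.mapDomain_add, map_add, ha, hb]
  | single g c =>
    simp only [chainsD, Finsupp.mapDomain_single, Finsupp.lsum_single,
      LinearMap.toSpanSingleton_apply, Finsupp.mapDomain_smul, Finsupp.mapDomain_add,
      Finsupp.mapDomain_finsetSum, Fin.comp_contractNth _ _ (map_mul φ)]
    rfl

theorem chainMapTriv_mem_cyclesAt (φ : G →* G') {n : ℕ} {z : (Fin n → G) →₀ ZMod p}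
    (hz : z ∈ cyclesAt p G n) : chainMapTriv p φ n z ∈ cyclesAt p G' n := by
  cases n with
  | zero => exact Submodule.mem_top
  | succ n =>
    change chainsD p G' n _ = 0
    rw [chainsD_chainMapTriv, show chainsD p G n z = 0 from hz, chainMapTriv,
      Finsupp.mapDomain_zero]

end ChainMaps

namespace Hgrp

variable {p n : ℕ}

section

variable {G G' G'' : Type*} [Group G] [Group G'] [Group G'']

def IsInducedBy (φ : G →* G') (g : Hgrp p G n →+ Hgrp p G' n) : Prop :=
  ∀ (z : (Fin n → G) →₀ ZMod p) (z' : (Fin n → G') →₀ ZMod p)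
    (hz : z ∈ cyclesAt p G n) (hz' : z' ∈ cyclesAt p G' n),
    chainMapTriv p φ n z = z' →
      g (Submodule.Quotient.mk ⟨z, hz⟩) = Submodule.Quotient.mk ⟨z', hz'⟩

theorem IsInducedBy.apply_mk {φ : G →* G'} {g : Hgrp p G n →+ Hgrp p G' n}
    (hg : IsInducedBy φ g) (z : (Fin n → G) →₀ ZMod p) (hz : z ∈ cyclesAt p G n) :
    g (Submodule.Quotient.mk ⟨z, hz⟩) =
      Submodule.Quotient.mk ⟨chainMapTriv p φ n z, chainMapTriv_mem_cyclesAt p φ hz⟩ :=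
  hg _ _ _ _ rfl

theorem IsInducedBy.ext {φ : G →* G'} {g g' : Hgrp p G n →+ Hgrp p G' n}
    (hg : IsInducedBy φ g) (hg' : IsInducedBy φ g') : g = g' := by
  ext x
  obtain ⟨⟨z, hz⟩, rfl⟩ := Submodule.Quotient.mk_surjective _ x
  rw [hg.apply_mk, hg'.apply_mk]

theorem isInducedBy_id : IsInducedBy (MonoidHom.id G) (AddMonoidHom.id (Hgrp p G n)) := by
  rintro z _ hz _ rfl
  simp only [chainMapTriv_id, AddMonoidHom.id_apply]

theorem IsInducedBy.comp {φ : G →* G'} {ψ : G' →* G''} {g : Hgrp p G n →+ Hgrp p G' n}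
    {g' : Hgrp p G' n →+ Hgrp p G'' n} (hg : IsInducedBy φ g) (hg' : IsInducedBy ψ g') :
    IsInducedBy (ψ.comp φ) (g'.comp g) := by
  rintro z _ hz _ rfl
  simp only [AddMonoidHom.comp_apply, hg.apply_mk, hg'.apply_mk, chainMapTriv_comp]

end

theorem directedSystem_of_isInducedBy {ι : Type*} [Preorder ι] {G : ι → Type*}
    [∀ i, Group (G i)] (φ : ∀ ⦃i j⦄, i ≤ j → G i →* G j) [DirectedSystem G fun _ _ h => φ h]
    (g : ∀ ⦃i j⦄, i ≤ j → Hgrp p (G i) n →+ Hgrp p (G j) n)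
    (hg : ∀ ⦃i j⦄ (h : i ≤ j), IsInducedBy (φ h) (g h)) :
    DirectedSystem (fun i => Hgrp p (G i) n) fun _ _ h => g h where
  map_self i x := by
    have hφ : φ (le_refl i) = MonoidHom.id (G i) :=
      MonoidHom.ext fun y => DirectedSystem.map_self (f := fun _ _ h => φ h) y
    rw [(hg le_rfl).ext (hφ ▸ isInducedBy_id)]
    rfl
  map_map k j i hij hjk x := by
    have hφ : (φ hjk).comp (φ hij) = φ (hij.trans hjk) :=
      MonoidHom.ext fun y => DirectedSystem.map_map (f := fun _ _ h => φ h) hij hjk y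
    rw [← AddMonoidHom.comp_apply, ((hg hij).comp (hg hjk)).ext (hφ ▸ hg (hij.trans hjk))]

end Hgrp

section ChainsAct

variable {G G' M M' : Type*} [Group G] [Group G'] [AddCommGroup M] [AddCommGroup M']

theorem chainsDAct_add (ρ : G →* AddAut M) (n : ℕ) (x y : (Fin (n + 1) → G) →₀ M) :
    chainsDAct ρ n (x + y) = chainsDAct ρ n x + chainsDAct ρ n y := by
  refine Finsupp.sum_add_index' (fun _ => by simp) fun _ _ _ => ?_
  simp only [map_add, Finsupp.single_add, smul_add, Finset.sum_add_distrib]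
  abel

theorem chainsDAct_neg (ρ : G →* AddAut M) (n : ℕ) (x : (Fin (n + 1) → G) →₀ M) :
    chainsDAct ρ n (-x) = -chainsDAct ρ n x :=
  (AddMonoidHom.mk' _ (chainsDAct_add ρ n)).map_neg x

theorem chainMapAct_zero (φ : G →* G') (n : ℕ) (x : (Fin n → G) →₀ M) :
    chainMapAct φ (0 : M →+ M') n x = 0 := by
  have : Finsupp.mapRange (⇑(0 : M →+ M')) (map_zero _) x = 0 := by ext; simp
  rw [chainMapAct, this, Finsupp.mapDomain_zero]

end ChainsAct

theorem stmt_13_general (p : ℕ) (B : Type*) [Group B]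
    (A : Subgroup B) (hA : A.Normal) (i j : ℕ) (𝓣 : Set (Subgroup B))
    (hdir : ∀ U₁ ∈ 𝓣, ∀ U₂ ∈ 𝓣, ∃ U ∈ 𝓣, U ≤ U₁ ⊓ U₂)
    (hfin : ∀ U ∈ 𝓣, Finite (Hgrp p ↥(A ⊓ U) j))
    -- the conjugation action of `V_U = U/(U∩A)` on `M_U = H_j(U∩A;F_p)`:
    (ρ : ∀ U ∈ 𝓣, (↥U ⧸ A.subgroupOf U) →* AddAut (Hgrp p ↥(A ⊓ U) j))
    -- the transition maps `M_{U₁} →+ M_{U₂}` induced by the inclusions `U₁ ∩ A ≤ U₂ ∩ A`: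
    (f : ∀ (U₁ : Subgroup B), U₁ ∈ 𝓣 → ∀ (U₂ : Subgroup B), U₂ ∈ 𝓣 → U₁ ≤ U₂ →
      (Hgrp p ↥(A ⊓ U₁) j →+ Hgrp p ↥(A ⊓ U₂) j))
    (hf : ∀ (U₁ : Subgroup B) (h₁ : U₁ ∈ 𝓣) (U₂ : Subgroup B) (h₂ : U₂ ∈ 𝓣)
      (hle : U₁ ≤ U₂) (z : (Fin j → ↥(A ⊓ U₁)) →₀ ZMod p)
      (z' : (Fin j → ↥(A ⊓ U₂)) →₀ ZMod p)
      (hz : z ∈ cyclesAt p ↥(A ⊓ U₁) j) (hz' : z' ∈ cyclesAt p ↥(A ⊓ U₂) j),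
      chainMapTriv p (Subgroup.inclusion (inf_le_inf_left A hle)) j z = z' →
        f U₁ h₁ U₂ h₂ hle (Submodule.Quotient.mk ⟨z, hz⟩) =
          Submodule.Quotient.mk ⟨z', hz'⟩)
    -- hypothesis: the inverse limit of the system `(M_U)` vanishes:
    (hlim : ∀ mfam : ∀ U ∈ 𝓣, Hgrp p ↥(A ⊓ U) j,
      (∀ (U₁ : Subgroup B) (h₁ : U₁ ∈ 𝓣) (U₂ : Subgroup B) (h₂ : U₂ ∈ 𝓣)
        (hle : U₁ ≤ U₂), f U₁ h₁ U₂ h₂ hle (mfam U₁ h₁) = mfam U₂ h₂) →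
      ∀ (U : Subgroup B) (hU : U ∈ 𝓣), mfam U hU = 0) :
    -- conclusion: the inverse limit of the system `(H_i(V_U;M_U))` vanishes:
    ∀ zfam : ∀ U ∈ 𝓣, (Fin i → ↥U ⧸ A.subgroupOf U) →₀ Hgrp p ↥(A ⊓ U) j,
      (∀ (U : Subgroup B) (hU : U ∈ 𝓣), IsCycleAct (ρ U hU) i (zfam U hU)) →
      (∀ (U₁ : Subgroup B) (h₁ : U₁ ∈ 𝓣) (U₂ : Subgroup B) (h₂ : U₂ ∈ 𝓣)
        (hle : U₁ ≤ U₂),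
        ∃ w : (Fin (i + 1) → ↥U₂ ⧸ A.subgroupOf U₂) →₀ Hgrp p ↥(A ⊓ U₂) j,
          chainMapAct (quotMapOf hA hle) (f U₁ h₁ U₂ h₂ hle) i (zfam U₁ h₁) -
            zfam U₂ h₂ = chainsDAct (ρ U₂ h₂) i w) →
      ∀ (U : Subgroup B) (hU : U ∈ 𝓣),
        ∃ w : (Fin (i + 1) → ↥U ⧸ A.subgroupOf U) →₀ Hgrp p ↥(A ⊓ U) j,
          zfam U hU = chainsDAct (ρ U hU) i w := by
  intro zfam _ hcompat U hU
  have : IsCodirectedOrder 𝓣 := ⟨fun U₁ U₂ => by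
    obtain ⟨W, hW, hle⟩ := hdir U₁.1 U₁.2 U₂.1 U₂.2
    exact ⟨⟨W, hW⟩, hle.trans inf_le_left, hle.trans inf_le_right⟩⟩
  have : ∀ V : 𝓣, Finite (Hgrp p ↥(A ⊓ V.1) j) := fun V => hfin V.1 V.2
  have : ∀ V : 𝓣, Nonempty (Hgrp p ↥(A ⊓ V.1) j) := fun _ => inferInstance
  have : DirectedSystem (fun V : 𝓣 => ↥(A ⊓ V.1))
      fun _ _ h => Subgroup.inclusion (inf_le_inf_left A h) :=
    ⟨fun _ _ => rfl, fun _ _ _ _ _ _ => rfl⟩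
  have := Hgrp.directedSystem_of_isInducedBy
    (fun (V₁ V₂ : 𝓣) h => Subgroup.inclusion (inf_le_inf_left A h))
    (fun V₁ V₂ h => f V₁.1 V₁.2 V₂.1 V₂.2 h) fun V₁ V₂ h => hf V₁.1 V₁.2 V₂.1 V₂.2 h
  obtain ⟨⟨W, hW⟩, hle, hzero⟩ := DirectedSystem.exists_map_eq_of_unique_compatible
    (f := fun (V₁ V₂ : 𝓣) h => f V₁.1 V₁.2 V₂.1 V₂.2 h) (fun _ => 0) (fun _ _ _ => map_zero _)
    (fun t ht => funext fun V => hlim (fun V hV => t ⟨V, hV⟩)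
      (fun V₁ h₁ V₂ h₂ hle => ht (i := ⟨V₁, h₁⟩) (j := ⟨V₂, h₂⟩) hle) V.1 V.2) ⟨U, hU⟩
  obtain ⟨w, hw⟩ := hcompat W hW U hU hle
  rw [show f W hW U hU hle = 0 from AddMonoidHom.ext hzero, chainMapAct_zero, zero_sub] at hw
  exact ⟨-w, by rw [chainsDAct_neg, ← hw, neg_neg]⟩

/-- Let `p` be a prime, `1 → A → B → C → 1` a short exact sequence of
groups, `i, j ≥ 0`, and `𝓣` a set of subgroups of `B` directed by reverse inclusion.
For `U ∈ 𝓣` set `M_U = H_j(U∩A;F_p)` and `V_U = U/(U∩A)`, with `V_U` acting on `M_U`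
via conjugation (the action `ρ`, characterised on representing cycles), and with
transition maps `f : M_{U₁} →+ M_{U₂}` (for `U₁ ⊆ U₂`) induced by the inclusions
(characterised on representing cycles).  Suppose each `M_U` is finite and the inverse
limit of the system `(M_U)` is zero.  Then the inverse limit of the system
`(H_i(V_U; M_U))` is zero: any family of `i`-cycles `z_U` (over `V_U`, with coefficients
`M_U`) which is compatible up to boundaries under the induced chain maps consists of
boundaries. -/
theorem stmt_13 (p : ℕ) (hp : p.Prime) (B C : Type*) [Group B] [Group C]
    (A : Subgroup B) (hA : A.Normal) (π : B →* C) (hπ : Function.Surjective π)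
    (hker : π.ker = A) (i j : ℕ) (𝓣 : Set (Subgroup B))
    (hdir : ∀ U₁ ∈ 𝓣, ∀ U₂ ∈ 𝓣, ∃ U ∈ 𝓣, U ≤ U₁ ⊓ U₂)
    (hfin : ∀ U ∈ 𝓣, Finite (Hgrp p ↥(A ⊓ U) j))
    -- the conjugation action of `V_U = U/(U∩A)` on `M_U = H_j(U∩A;F_p)`:
    (ρ : ∀ U ∈ 𝓣, (↥U ⧸ A.subgroupOf U) →* AddAut (Hgrp p ↥(A ⊓ U) j))
    (hρ : ∀ (U : Subgroup B) (hU : U ∈ 𝓣) (u : U)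
      (z z' : (Fin j → ↥(A ⊓ U)) →₀ ZMod p)
      (hz : z ∈ cyclesAt p ↥(A ⊓ U) j) (hz' : z' ∈ cyclesAt p ↥(A ⊓ U) j),
      chainMapTriv p (conjHom hA u) j z = z' →
        ρ U hU (QuotientGroup.mk u) (Submodule.Quotient.mk ⟨z, hz⟩) =
          Submodule.Quotient.mk ⟨z', hz'⟩)
    -- the transition maps `M_{U₁} →+ M_{U₂}` induced by the inclusions `U₁ ∩ A ≤ U₂ ∩ A`:
    (f : ∀ (U₁ : Subgroup B), U₁ ∈ 𝓣 → ∀ (U₂ : Subgroup B), U₂ ∈ 𝓣 → U₁ ≤ U₂ →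
      (Hgrp p ↥(A ⊓ U₁) j →+ Hgrp p ↥(A ⊓ U₂) j))
    (hf : ∀ (U₁ : Subgroup B) (h₁ : U₁ ∈ 𝓣) (U₂ : Subgroup B) (h₂ : U₂ ∈ 𝓣)
      (hle : U₁ ≤ U₂) (z : (Fin j → ↥(A ⊓ U₁)) →₀ ZMod p)
      (z' : (Fin j → ↥(A ⊓ U₂)) →₀ ZMod p)
      (hz : z ∈ cyclesAt p ↥(A ⊓ U₁) j) (hz' : z' ∈ cyclesAt p ↥(A ⊓ U₂) j),
      chainMapTriv p (Subgroup.inclusion (inf_le_inf_left A hle)) j z = z' →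
        f U₁ h₁ U₂ h₂ hle (Submodule.Quotient.mk ⟨z, hz⟩) =
          Submodule.Quotient.mk ⟨z', hz'⟩)
    -- hypothesis: the inverse limit of the system `(M_U)` vanishes:
    (hlim : ∀ mfam : ∀ U ∈ 𝓣, Hgrp p ↥(A ⊓ U) j,
      (∀ (U₁ : Subgroup B) (h₁ : U₁ ∈ 𝓣) (U₂ : Subgroup B) (h₂ : U₂ ∈ 𝓣)
        (hle : U₁ ≤ U₂), f U₁ h₁ U₂ h₂ hle (mfam U₁ h₁) = mfam U₂ h₂) →
      ∀ (U : Subgroup B) (hU : U ∈ 𝓣), mfam U hU = 0) :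
    -- conclusion: the inverse limit of the system `(H_i(V_U;M_U))` vanishes:
    ∀ zfam : ∀ U ∈ 𝓣, (Fin i → ↥U ⧸ A.subgroupOf U) →₀ Hgrp p ↥(A ⊓ U) j,
      (∀ (U : Subgroup B) (hU : U ∈ 𝓣), IsCycleAct (ρ U hU) i (zfam U hU)) →
      (∀ (U₁ : Subgroup B) (h₁ : U₁ ∈ 𝓣) (U₂ : Subgroup B) (h₂ : U₂ ∈ 𝓣)
        (hle : U₁ ≤ U₂),
        ∃ w : (Fin (i + 1) → ↥U₂ ⧸ A.subgroupOf U₂) →₀ Hgrp p ↥(A ⊓ U₂) j,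
          chainMapAct (quotMapOf hA hle) (f U₁ h₁ U₂ h₂ hle) i (zfam U₁ h₁) -
            zfam U₂ h₂ = chainsDAct (ρ U₂ h₂) i w) →
      ∀ (U : Subgroup B) (hU : U ∈ 𝓣),
        ∃ w : (Fin (i + 1) → ↥U ⧸ A.subgroupOf U) →₀ Hgrp p ↥(A ⊓ U) j,
          zfam U hU = chainsDAct (ρ U hU) i w :=
  stmt_13_general p B A hA i j 𝓣 hdir hfin ρ f hf hlim
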